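/- arXiv:1712.03010 — 2 statements merged into one kernel-verified Lean document; each statement's English description precedes it below -/
import Mathlib

section
/- Suppose a nonnegative sequence e: ℕ → ℝ satisfies e(t+1) ≤ e(t) − e(t)²/α for all t ≥ t₀ with α > 0, and e(t₀) ≤ α/2. Then e(t) ≤ α/(2 + t − t₀) for all t ≥ t₀. -/
/-- If a nonnegative sequence satisfies `e (t+1) ≤ e t − (e t)²/α` for `t ≥ t₀` and
`e t₀ ≤ α/2`, then `e t ≤ α/(2 + t − t₀)` for all `t ≥ t₀`. -/
theorem bandit_sublinear_induction (α : ℝ) (hα : 0 < α) (t₀ : ℕ)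
    (e : ℕ → ℝ) (hnonneg : ∀ t, 0 ≤ e t)
    (hbase : e t₀ ≤ α / 2)
    (hrec : ∀ t, t₀ ≤ t → e (t + 1) ≤ e t - (e t) ^ 2 / α) :
    ∀ t, t₀ ≤ t → e t ≤ α / (2 + t - t₀ : ℕ) := by
  intro t ht
  induction t, ht using Nat.le_induction with
  | base =>
    have : (2 + t₀ - t₀ : ℕ) = 2 := by omega
    rw [this]
    norm_num
    linarith
  | succ t ht ih =>
    have h1 : (2 + t - t₀ : ℕ) = (t - t₀) + 2 := by omega
    have h2 : (2 + (t + 1) - t₀ : ℕ) = (t - t₀) + 3 := by omega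
    rw [h1] at ih
    rw [h2]
    set n : ℕ := t - t₀ with hn
    have hn2 : (0:ℝ) < (n:ℝ) + 2 := by positivity
    have hn3 : (0:ℝ) < (n:ℝ) + 3 := by positivity
    have hc : α / ((n:ℝ) + 2) ≤ α / 2 := by
      apply div_le_div_of_nonneg_left (le_of_lt hα) (by norm_num)
      linarith
    push_cast at ih ⊢
    have he : e t ≤ α / ((n:ℝ) + 2) := ih
    have h0 : 0 ≤ e t := hnonneg t
    have hstep := hrec t ht
    -- monotonicity: e t ≤ c ≤ α/2 ⇒ e t - (e t)²/α ≤ c - c²/α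
    set c : ℝ := α / ((n:ℝ) + 2) with hcdef
    have hmono : e t - (e t)^2 / α ≤ c - c^2 / α := by
      rw [div_le_div_iff₀ hn2 (by norm_num : (0:ℝ) < 2)] at hc
      have hsum : e t + c ≤ α := by
        have : c ≤ α / 2 := by
          rw [hcdef, div_le_div_iff₀ hn2 (by norm_num : (0:ℝ) < 2)]; linarith
        linarith [he]
      have : (c - e t) * (1 - (e t + c) / α) ≥ 0 := by
        apply mul_nonneg (by linarith)
        rw [sub_nonneg, div_le_one hα]; exact hsum
      have hexp : c - c^2/α - (e t - (e t)^2/α) = (c - e t) * (1 - (e t + c)/α) := by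
        field_simp; ring
      linarith [hexp ▸ this]
    have hfinal : c - c^2 / α ≤ α / ((n:ℝ) + 3) := by
      have heq : c - c^2 / α = α * ((n:ℝ) + 1) / ((n:ℝ) + 2)^2 := by
        rw [hcdef]; field_simp; ring
      rw [heq, div_le_div_iff₀ (by positivity) hn3]
      nlinarith [hα.le, sq_nonneg ((n:ℝ)+2)]
    linarith
end

section
/- Suppose e: ℕ → ℝ is nonnegative and nonincreasing, e(t+1) ≤ e(t) − e(t)²/α whenever e(t) > α/2 (for α > 0), and t₀ ≥ (4e(0)/α)·log(2e(0)/α) with e(0) > α/2. Then e(t₀) ≤ α/2. -/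
/-- Base case for the bandit bound: if `e` is nonnegative nonincreasing with
`e (t+1) ≤ e t − (e t)²/α` whenever `e t > α/2`, `e 0 > α/2`, and
`t₀ ≥ (4 e 0 / α) log (2 e 0 / α)`, then `e t₀ ≤ α/2`. -/
theorem bandit_base_case (α : ℝ) (hα : 0 < α) (t₀ : ℕ)
    (e : ℕ → ℝ) (hnonneg : ∀ t, 0 ≤ e t) (hmono : ∀ t, e (t + 1) ≤ e t)
    (hrec : ∀ t, α / 2 < e t → e (t + 1) ≤ e t - (e t) ^ 2 / α)
    (he0 : α / 2 < e 0)
    (ht₀ : (t₀ : ℝ) ≥ 4 * e 0 / α * Real.log (2 * e 0 / α)) :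
    e t₀ ≤ α / 2 := by
  by_contra hcon
  push_neg at hcon
  have hanti : Antitone e := antitone_nat_of_succ_le hmono
  have hgt : ∀ t, t ≤ t₀ → α / 2 < e t := fun t ht => lt_of_lt_of_le hcon (hanti ht)
  have hhalf : ∀ t, t < t₀ → e (t + 1) ≤ e t / 2 := by
    intro t ht
    have h1 := hrec t (hgt t ht.le)
    have h2 : e t / 2 ≤ e t ^ 2 / α := by
      rw [div_le_div_iff₀ (by norm_num) hα]
      nlinarith [hgt t ht.le, hnonneg t]
    linarith
  have hdecay : ∀ t, t ≤ t₀ → e t ≤ e 0 / 2 ^ t := by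
    intro t ht
    induction t with
    | zero => simp
    | succ n ih =>
      have hn : n ≤ t₀ := Nat.le_of_succ_le ht
      have h1 := hhalf n (Nat.lt_of_succ_le ht)
      have h2 := ih hn
      have hp : (0:ℝ) < 2 ^ n := by positivity
      rw [pow_succ, ← div_div]
      linarith
  have h1 : α / 2 < e 0 / 2 ^ t₀ := lt_of_lt_of_le hcon (hdecay t₀ le_rfl)
  have hp : (0:ℝ) < 2 ^ t₀ := by positivity
  have h2 : (2:ℝ) ^ t₀ < 2 * e 0 / α := by
    rw [lt_div_iff₀ hα]
    rw [div_lt_div_iff₀ (by norm_num) hp] at h1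
    linarith
  have hL : 0 < Real.log (2 * e 0 / α) := by
    apply Real.log_pos
    rw [lt_div_iff₀ hα]; linarith
  have h3 : (t₀ : ℝ) * Real.log 2 < Real.log (2 * e 0 / α) := by
    have := Real.log_lt_log hp h2
    rwa [Real.log_pow] at this
  have h4 : (t₀ : ℝ) ≥ 2 * Real.log (2 * e 0 / α) := by
    have hge : 4 * e 0 / α ≥ 2 := by
      rw [ge_iff_le, le_div_iff₀ hα]; linarith
    nlinarith [ht₀, hL]
  nlinarith [Real.log_two_gt_d9, hL]
end
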